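/- Under the same assumptions, the family F_0,…,F_{b−1} is the unique family of bounded functions on Σ^∞ satisfying the system F_r(v) = p_{r v_1} F_{v_1}(v̄) + Σ_{k=0}^{v_1 − 1} p_{rk} for all r ∈ Σ and v ∈ Σ^∞. -/

import Mathlib

/-!
Splitting a word `u ∈ Σ^{n+1}` into its first symbol `a` and the rest, the words with `a < w₀`
contribute their full mass `p_{r a}`, those with `a > w₀` nothing, and those with `a = w₀`
contribute `p_{r w₀}` times the order-`n` sum for `w̄` from state `w₀`. So the approximating sums
satisfy the system up to an index shift, lie in `[0, 1]`, and the system passes to the limit `F`.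
The difference `D` of two bounded solutions satisfies `|D_r(w)| ≤ q |D_{w₀}(w̄)|` with
`q = max p_{ij} < 1`, hence `|D| ≤ qⁿ sup |D|` for every `n`.
-/

open scoped Classical

/-- `prefProb p r v k` is the probability `π_r(v^{(k)})` for the Markov chain with
transition matrix `p` started from row `r`. -/
def prefProb {b : ℕ} (p : Fin b → Fin b → ℝ) : Fin b → (ℕ → Fin b) → ℕ → ℝ
  | _, _, 0 => 1
  | r, v, (k + 1) => p r (v 0) * prefProb p (v 0) (fun i => v (i + 1)) k

/-- Lexicographic comparison of a finite word `u ∈ Σ^n` with an infinite string `w`: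
`u ≤ w` iff at every index, if `u` and `w` agree strictly before it, then the symbol of
`u` there is at most that of `w`. -/
def wordLe {b n : ℕ} (u : Fin n → Fin b) (w : ℕ → Fin b) : Prop :=
  ∀ i : Fin n, (∀ k : Fin n, (k : ℕ) < (i : ℕ) → u k = w k) → u i ≤ w i

/-- Extension of a finite word `u ∈ Σ^n` to an infinite string (using `w` beyond `n`). -/
def extendWord {b n : ℕ} (u : Fin n → Fin b) (w : ℕ → Fin b) : ℕ → Fin b :=
  fun i => if h : i < n then u ⟨i, h⟩ else w i

open Filter Topology

theorem sum_pi_fin_succ {α M : Type*} [Fintype α] [AddCommMonoid M] {n : ℕ}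
    (f : (Fin (n + 1) → α) → M) :
    ∑ u, f u = ∑ a, ∑ u : Fin n → α, f (Fin.cons a u) := by
  rw [← (Fin.consEquiv fun _ => α).sum_comp, Fintype.sum_prod_type]
  rfl

theorem exists_lt_forall_le_of_finite {ι α : Type*} [Finite ι] [LinearOrder α] [NoMinOrder α]
    {f : ι → α} {c : α} (h : ∀ i, f i < c) : ∃ q < c, ∀ i, f i ≤ q := by
  cases isEmpty_or_nonempty ι
  · obtain ⟨q, hq⟩ := exists_lt c
    exact ⟨q, hq, isEmptyElim⟩
  · obtain ⟨i₀, hi₀⟩ := Finite.exists_max f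
    exact ⟨f i₀, h i₀, hi₀⟩

theorem exists_forall_abs_le_of_finite {ι α : Type*} [Finite ι] {f : ι → α → ℝ}
    (hf : ∀ i, ∃ C, ∀ x, |f i x| ≤ C) : ∃ C, ∀ i x, |f i x| ≤ C := by
  choose C hC using hf
  obtain ⟨M, hM⟩ := Finite.exists_le C
  exact ⟨M, fun i x => (hC i x).trans (hM i)⟩

theorem eq_zero_of_abs_le_mul_abs_comp {X : Type*} {f : X → ℝ} {T : X → X} {q M : ℝ}
    (hq₀ : 0 ≤ q) (hq₁ : q < 1) (hM : ∀ x, |f x| ≤ M) (hT : ∀ x, |f x| ≤ q * |f (T x)|)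
    (x : X) : f x = 0 := by
  have hpow : ∀ n : ℕ, ∀ x, |f x| ≤ q ^ n * M := by
    intro n
    induction n with
    | zero => simpa using hM
    | succ n ih =>
      intro x
      calc |f x| ≤ q * |f (T x)| := hT x
        _ ≤ q * (q ^ n * M) := mul_le_mul_of_nonneg_left (ih (T x)) hq₀
        _ = q ^ (n + 1) * M := by ring
  have hlim : Tendsto (fun n : ℕ => q ^ n * M) atTop (𝓝 0) := by
    simpa using (tendsto_pow_atTop_nhds_zero_of_lt_one hq₀ hq₁).mul_const M
  exact abs_nonpos_iff.mp (ge_of_tendsto' hlim fun n => hpow n x)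

section Words

variable {b n : ℕ}

theorem extendWord_cons_zero (a : Fin b) (u : Fin n → Fin b) (w : ℕ → Fin b) :
    extendWord (Fin.cons a u) w 0 = a := by
  simp [extendWord]

theorem extendWord_cons_succ (a : Fin b) (u : Fin n → Fin b) (w : ℕ → Fin b) :
    (fun i => extendWord (Fin.cons a u) w (i + 1)) = extendWord u (fun i => w (i + 1)) := by
  funext i
  by_cases h : i < n
  · simp [extendWord, h, ← Fin.succ_mk]
  · simp [extendWord, h]

theorem wordLe_cons (a : Fin b) (u : Fin n → Fin b) (w : ℕ → Fin b) :
    wordLe (Fin.cons a u) w ↔ a < w 0 ∨ (a = w 0 ∧ wordLe u (fun i => w (i + 1))) := by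
  simp only [wordLe, Fin.forall_fin_succ, Fin.cons_zero, Fin.cons_succ, Fin.val_zero, Fin.val_succ,
    Nat.not_lt_zero, Nat.succ_lt_succ_iff]
  simp only [IsEmpty.forall_iff, implies_true, and_self, Nat.succ_pos, true_implies, and_imp]
  rcases lt_trichotomy a (w 0) with h | rfl | h
  · simp [h, h.le, h.ne]
  · simp
  · simp [h.not_ge, h.not_gt, h.ne']

end Words

section MarkovChain

variable {b : ℕ} {p : Fin b → Fin b → ℝ}

theorem prefProb_succ (r : Fin b) (w : ℕ → Fin b) (n : ℕ) :
    prefProb p r w (n + 1) = p r (w 0) * prefProb p (w 0) (fun i => w (i + 1)) n :=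
  rfl

theorem prefProb_extendWord_cons {n : ℕ} (r a : Fin b) (u : Fin n → Fin b) (w : ℕ → Fin b) :
    prefProb p r (extendWord (Fin.cons a u) w) (n + 1)
      = p r a * prefProb p a (extendWord u (fun i => w (i + 1))) n := by
  rw [prefProb_succ, extendWord_cons_zero, extendWord_cons_succ]

theorem prefProb_nonneg (hp : ∀ i j, 0 ≤ p i j) (r : Fin b) (w : ℕ → Fin b) (n : ℕ) :
    0 ≤ prefProb p r w n := by
  induction n generalizing r w with
  | zero => exact zero_le_one
  | succ n ih => exact mul_nonneg (hp _ _) (ih _ _)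

theorem sum_prefProb_extendWord (hstoch : ∀ i, ∑ j, p i j = 1) (n : ℕ) (r : Fin b)
    (w : ℕ → Fin b) : ∑ u : Fin n → Fin b, prefProb p r (extendWord u w) n = 1 := by
  induction n generalizing r w with
  | zero => simp [prefProb]
  | succ n ih =>
    simp only [sum_pi_fin_succ, prefProb_extendWord_cons, ← Finset.mul_sum, ih, mul_one, hstoch]

noncomputable def partialCdf (p : Fin b → Fin b → ℝ) (n : ℕ) (r : Fin b) (w : ℕ → Fin b) : ℝ :=
  ∑ u : Fin n → Fin b, if wordLe u w then prefProb p r (extendWord u w) n else 0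

theorem partialCdf_nonneg (hp : ∀ i j, 0 ≤ p i j) (n : ℕ) (r : Fin b) (w : ℕ → Fin b) :
    0 ≤ partialCdf p n r w :=
  Finset.sum_nonneg fun _ _ => by split_ifs <;> simp [prefProb_nonneg hp]

theorem partialCdf_le_one (hp : ∀ i j, 0 ≤ p i j) (hstoch : ∀ i, ∑ j, p i j = 1) (n : ℕ)
    (r : Fin b) (w : ℕ → Fin b) : partialCdf p n r w ≤ 1 := by
  rw [← sum_prefProb_extendWord hstoch n r w]
  exact Finset.sum_le_sum fun _ _ => by split_ifs <;> simp [prefProb_nonneg hp]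

theorem sum_ite_wordLe_cons (hstoch : ∀ i, ∑ j, p i j = 1) (n : ℕ) (r a : Fin b)
    (w : ℕ → Fin b) :
    ∑ u : Fin n → Fin b,
        (if wordLe (Fin.cons a u) w then prefProb p r (extendWord (Fin.cons a u) w) (n + 1) else 0)
      = (if a < w 0 then p r a else 0) +
        (if a = w 0 then p r a * partialCdf p n a (fun i => w (i + 1)) else 0) := by
  simp only [wordLe_cons, prefProb_extendWord_cons]
  rcases lt_trichotomy a (w 0) with h | rfl | h
  · simp [h, h.ne, ← Finset.mul_sum, sum_prefProb_extendWord hstoch]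
  · simp [partialCdf, Finset.mul_sum, mul_ite]
  · simp [h.not_gt, h.ne']

theorem partialCdf_succ (hstoch : ∀ i, ∑ j, p i j = 1) (n : ℕ) (r : Fin b) (w : ℕ → Fin b) :
    partialCdf p (n + 1) r w = p r (w 0) * partialCdf p n (w 0) (fun i => w (i + 1)) +
      ∑ k ∈ Finset.univ.filter (fun k => k < w 0), p r k := by
  rw [partialCdf, sum_pi_fin_succ]
  simp only [sum_ite_wordLe_cons hstoch, Finset.sum_add_distrib, Finset.sum_ite_eq',
    Finset.mem_univ, if_true, Finset.sum_filter]
  ring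

end MarkovChain

section LexSystem

variable {b : ℕ} {p : Fin b → Fin b → ℝ}

def SolvesLexSystem (p : Fin b → Fin b → ℝ) (G : Fin b → (ℕ → Fin b) → ℝ) : Prop :=
  ∀ r (v : ℕ → Fin b),
    G r v = p r (v 0) * G (v 0) (fun i => v (i + 1)) +
      ∑ k ∈ Finset.univ.filter (fun k => k < v 0), p r k

theorem solvesLexSystem_of_tendsto_partialCdf (hstoch : ∀ i, ∑ j, p i j = 1)
    {F : Fin b → (ℕ → Fin b) → ℝ}
    (hF : ∀ r w, Tendsto (fun n => partialCdf p n r w) atTop (𝓝 (F r w))) :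
    SolvesLexSystem p F := fun r v =>
  tendsto_nhds_unique ((hF r v).comp (tendsto_add_atTop_nat 1)) <| by
    simpa only [Function.comp_def, partialCdf_succ hstoch] using
      ((hF (v 0) (fun i => v (i + 1))).const_mul _).add_const _

theorem abs_le_one_of_tendsto_partialCdf (hp : ∀ i j, 0 ≤ p i j)
    (hstoch : ∀ i, ∑ j, p i j = 1) {r : Fin b} {w : ℕ → Fin b} {x : ℝ}
    (hx : Tendsto (fun n => partialCdf p n r w) atTop (𝓝 x)) : |x| ≤ 1 :=
  abs_le.mpr ⟨by linarith [ge_of_tendsto' hx fun n => partialCdf_nonneg hp n r w],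
    le_of_tendsto' hx fun n => partialCdf_le_one hp hstoch n r w⟩

theorem SolvesLexSystem.eq_of_bounded (hp₀ : ∀ i j, 0 ≤ p i j) (hp₁ : ∀ i j, p i j < 1)
    {G F : Fin b → (ℕ → Fin b) → ℝ} (hG : SolvesLexSystem p G) (hF : SolvesLexSystem p F)
    (hGb : ∀ r, ∃ C, ∀ v, |G r v| ≤ C) (hFb : ∀ r, ∃ C, ∀ v, |F r v| ≤ C) : G = F := by
  obtain ⟨q, hq₁, hpq⟩ :=
    exists_lt_forall_le_of_finite (f := fun ij : Fin b × Fin b => p ij.1 ij.2) fun ij =>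
      hp₁ ij.1 ij.2
  obtain ⟨CG, hCG⟩ := exists_forall_abs_le_of_finite hGb
  obtain ⟨CF, hCF⟩ := exists_forall_abs_le_of_finite hFb
  have hcontract : ∀ r w, |G r w - F r w|
      ≤ max q 0 * |G (w 0) (fun i => w (i + 1)) - F (w 0) (fun i => w (i + 1))| := by
    intro r w
    rw [hG r w, hF r w, add_sub_add_right_eq_sub, ← mul_sub, abs_mul, abs_of_nonneg (hp₀ _ _)]
    exact mul_le_mul_of_nonneg_right ((hpq (r, w 0)).trans (le_max_left _ _)) (abs_nonneg _)
  funext r w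
  refine sub_eq_zero.mp <| eq_zero_of_abs_le_mul_abs_comp (f := fun x => G x.1 x.2 - F x.1 x.2)
    (T := fun x => (x.2 0, fun i => x.2 (i + 1))) (le_max_right q 0) (max_lt hq₁ one_pos)
    (fun x => (abs_sub _ _).trans (add_le_add (hCG x.1 x.2) (hCF x.1 x.2)))
    (fun x => hcontract x.1 x.2) (r, w)

end LexSystem

theorem F_unique_bounded_solution_general (b : ℕ)
    (p : Fin b → Fin b → ℝ)
    (hp : ∀ i j, 0 < p i j ∧ p i j < 1)
    (hstoch : ∀ i, ∑ j, p i j = 1)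
    (F : Fin b → (ℕ → Fin b) → ℝ)
    (hF : ∀ r (w : ℕ → Fin b),
      Filter.Tendsto
        (fun n => ∑ u : Fin n → Fin b,
          if wordLe u w then prefProb p r (extendWord u w) n else 0)
        Filter.atTop (nhds (F r w))) :
    ((∀ r, ∃ C : ℝ, ∀ v, |F r v| ≤ C) ∧
      (∀ r (v : ℕ → Fin b),
        F r v = p r (v 0) * F (v 0) (fun i => v (i + 1)) +
          ∑ k ∈ Finset.univ.filter (fun k => k < v 0), p r k)) ∧
    (∀ G : Fin b → (ℕ → Fin b) → ℝ,
      (∀ r, ∃ C : ℝ, ∀ v, |G r v| ≤ C) →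
      (∀ r (v : ℕ → Fin b),
        G r v = p r (v 0) * G (v 0) (fun i => v (i + 1)) +
          ∑ k ∈ Finset.univ.filter (fun k => k < v 0), p r k) →
      G = F) := by
  have hp₀ : ∀ i j, 0 ≤ p i j := fun i j => (hp i j).1.le
  have hFb : ∀ r, ∃ C : ℝ, ∀ v, |F r v| ≤ C := fun r =>
    ⟨1, fun v => abs_le_one_of_tendsto_partialCdf hp₀ hstoch (hF r v)⟩
  have hFsol : SolvesLexSystem p F := solvesLexSystem_of_tendsto_partialCdf hstoch hF
  exact ⟨⟨hFb, hFsol⟩, fun G hGb hGsol =>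
    SolvesLexSystem.eq_of_bounded hp₀ (fun i j => (hp i j).2) hGsol hFsol hGb hFb⟩

/-- The functions `F_r(w) = lim_n Σ_{v ≤ w, v ∈ Σ^n} π_r(v)` form the unique family of
bounded functions on `Σ^∞` satisfying
`F_r(v) = p_{r v₁} F_{v₁}(v̄) + Σ_{k < v₁} p_{r k}`. -/
theorem F_unique_bounded_solution (b : ℕ) (hb : 2 ≤ b)
    (p : Fin b → Fin b → ℝ)
    (hp : ∀ i j, 0 < p i j ∧ p i j < 1)
    (hstoch : ∀ i, ∑ j, p i j = 1)
    (F : Fin b → (ℕ → Fin b) → ℝ)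
    (hF : ∀ r (w : ℕ → Fin b),
      Filter.Tendsto
        (fun n => ∑ u : Fin n → Fin b,
          if wordLe u w then prefProb p r (extendWord u w) n else 0)
        Filter.atTop (nhds (F r w))) :
    ((∀ r, ∃ C : ℝ, ∀ v, |F r v| ≤ C) ∧
      (∀ r (v : ℕ → Fin b),
        F r v = p r (v 0) * F (v 0) (fun i => v (i + 1)) +
          ∑ k ∈ Finset.univ.filter (fun k => k < v 0), p r k)) ∧
    (∀ G : Fin b → (ℕ → Fin b) → ℝ,
      (∀ r, ∃ C : ℝ, ∀ v, |G r v| ≤ C) →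
      (∀ r (v : ℕ → Fin b),
        G r v = p r (v 0) * G (v 0) (fun i => v (i + 1)) +
          ∑ k ∈ Finset.univ.filter (fun k => k < v 0), p r k) →
      G = F) :=
  F_unique_bounded_solution_general b p hp hstoch F hF
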